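/- arXiv:2101.07170 — 3 statements merged into one kernel-verified Lean document; each statement's English description precedes it below -/
import Mathlib

section
/- The quantity C = m₁² + (m₂ − B e₂ sin q)² + (m₃ + B(e₁ + e₂ cos q))² is a Casimir of the Poisson bracket on ℝ⁵ with coordinates (m₁, m₂, m₃, q, p) defined by {m₁,m₂} = −m₃ − B(e₁ + e₂ cos q), {m₂,m₃} = −m₁, {m₁,m₃} = m₂ − B e₂ sin q, {m₂,p} = B e₂ cos q, {m₃,p} = B e₂ sin q, {q,p} = 1, with all other brackets of coordinates zero. That is, the bracket of C with each of the coordinate functions m₁, m₂, m₃, q, p vanishes. -/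
open Real

/-! Put `u = m₂ - B e₂ sin q` and `w = m₃ + B (e₁ + e₂ cos q)`, so that `C = m₁² + u² + w²`.
In the variables `(m₁, u, w)` the `m`-block of the structure matrix is the `so(3)` bracket, and
`∇C` annihilates those three columns just as `|m|²` is a Casimir of `so(3)`; `C` does not depend
on `p`, which kills the `q`-column. By `sin² + cos² = 1`, `u² + w²` is affine in `sin q` and `cos q`,
and its `q`-derivative cancels exactly the `p`-column terms `B e₂ (cos q ∂C/∂m₂ + sin q ∂C/∂m₃)`. -/

theorem hasDerivAt_sq_sub_sin_add_sq_add_cos (r s c x : ℝ) :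
    HasDerivAt (fun y => (r - c * sin y) ^ 2 + (s + c * cos y) ^ 2)
      (-2 * c * (r * cos x + s * sin x)) x := by
  have pythagoras : (fun y => (r - c * sin y) ^ 2 + (s + c * cos y) ^ 2) =
      fun y => r ^ 2 + s ^ 2 + c ^ 2 - 2 * c * (r * sin y - s * cos y) := by
    funext y
    linear_combination c ^ 2 * sin_sq_add_cos_sq y
  rw [pythagoras]
  refine ((((hasDerivAt_sin x).const_mul r).fun_sub ((hasDerivAt_cos x).const_mul s)).const_mul
    (2 * c) |>.const_sub (r ^ 2 + s ^ 2 + c ^ 2)).congr_deriv ?_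
  ring

theorem stmt_2_general (B e₁ e₂ m₁ m₂ m₃ q p : ℝ) :
    let C : ℝ → ℝ → ℝ → ℝ → ℝ → ℝ := fun a b c d e =>
      a ^ 2 + (b - B * e₂ * Real.sin d) ^ 2 + (c + B * (e₁ + e₂ * Real.cos d)) ^ 2
    let dC : Fin 5 → ℝ :=
      ![deriv (fun x => C x m₂ m₃ q p) m₁,
        deriv (fun x => C m₁ x m₃ q p) m₂,
        deriv (fun x => C m₁ m₂ x q p) m₃,
        deriv (fun x => C m₁ m₂ m₃ x p) q,
        deriv (fun x => C m₁ m₂ m₃ q x) p]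
    let P : Matrix (Fin 5) (Fin 5) ℝ :=
      !![0, -m₃ - B * (e₁ + e₂ * Real.cos q), m₂ - B * e₂ * Real.sin q, 0, 0;
         m₃ + B * (e₁ + e₂ * Real.cos q), 0, -m₁, 0, B * e₂ * Real.cos q;
         -(m₂ - B * e₂ * Real.sin q), m₁, 0, 0, B * e₂ * Real.sin q;
         0, 0, 0, 0, 1;
         0, -(B * e₂ * Real.cos q), -(B * e₂ * Real.sin q), -1, 0]
    ∀ k : Fin 5, ∑ i : Fin 5, dC i * P i k = 0 := by
  intro C dC P k
  have angle_partial : deriv (fun x => C m₁ m₂ m₃ x p) q =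
      -2 * (B * e₂) * (m₂ * cos q + (m₃ + B * e₁) * sin q) := by
    rw [← ((hasDerivAt_sq_sub_sin_add_sq_add_cos m₂ (m₃ + B * e₁) (B * e₂) q).const_add
      (m₁ ^ 2)).deriv]
    congr 1
    funext x
    ring
  have gradient : dC = ![2 * m₁, 2 * (m₂ - B * e₂ * sin q), 2 * (m₃ + B * (e₁ + e₂ * cos q)),
      -2 * (B * e₂) * (m₂ * cos q + (m₃ + B * e₁) * sin q), 0] := by
    simp [dC, C, angle_partial]
  rw [gradient]
  fin_cases k <;> simp [Fin.sum_univ_five, P] <;> ring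

/-- The square of the momentum map is a Casimir of the reduced Poisson structure:
the bracket of `C` with each coordinate function vanishes, where the bracket of two
functions is `∑ i j, ∂F/∂xᵢ ⬝ Pᵢⱼ ⬝ ∂G/∂xⱼ` with `P` the structure matrix. -/
theorem stmt_2 (B e₁ e₂ m₁ m₂ m₃ q p : ℝ) (hq : q ∈ Set.Ioo 0 π) :
    let C : ℝ → ℝ → ℝ → ℝ → ℝ → ℝ := fun a b c d e =>
      a ^ 2 + (b - B * e₂ * Real.sin d) ^ 2 + (c + B * (e₁ + e₂ * Real.cos d)) ^ 2
    let dC : Fin 5 → ℝ :=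
      ![deriv (fun x => C x m₂ m₃ q p) m₁,
        deriv (fun x => C m₁ x m₃ q p) m₂,
        deriv (fun x => C m₁ m₂ x q p) m₃,
        deriv (fun x => C m₁ m₂ m₃ x p) q,
        deriv (fun x => C m₁ m₂ m₃ q x) p]
    let P : Matrix (Fin 5) (Fin 5) ℝ :=
      !![0, -m₃ - B * (e₁ + e₂ * Real.cos q), m₂ - B * e₂ * Real.sin q, 0, 0;
         m₃ + B * (e₁ + e₂ * Real.cos q), 0, -m₁, 0, B * e₂ * Real.cos q;
         -(m₂ - B * e₂ * Real.sin q), m₁, 0, 0, B * e₂ * Real.sin q;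
         0, 0, 0, 0, 1;
         0, -(B * e₂ * Real.cos q), -(B * e₂ * Real.sin q), -1, 0]
    ∀ k : Fin 5, ∑ i : Fin 5, dC i * P i k = 0 :=
  stmt_2_general B e₁ e₂ m₁ m₂ m₃ q p
end

section
/- Let μ₁, μ₂ > 0, e₁, e₂, B real, and V'(π/2) real. The system of equations μ₂ m₂ (Be₁ + m₃) + Be₂ μ₁ m₃ − μ₁ m₂ m₃ = 0 and m₃(Be₂ μ₁ + μ₂ m₂) + μ₁ μ₂ V'(π/2) = 0 has a real solution (m₂, m₃) only if B⁴e₁²e₂² + 2B²e₁e₂(μ₁ + μ₂)V'(π/2) + (μ₁ − μ₂)² V'(π/2)² ≥ 0. -/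
/-- The equilibrium equations at `q = π/2` have a real solution `(m₂, m₃)` only if the
discriminant `B⁴e₁²e₂² + 2B²e₁e₂(μ₁+μ₂)V' + (μ₁−μ₂)²V'²` is nonnegative. -/
theorem stmt_6 (μ₁ μ₂ B e₁ e₂ V' : ℝ) (hμ₁ : 0 < μ₁) (hμ₂ : 0 < μ₂)
    (hBe₁ : B * e₁ ≠ 0) (hBe₂ : B * e₂ ≠ 0) (hV' : V' ≠ 0)
    (h : ∃ m₂ m₃ : ℝ,
        μ₂ * m₂ * (B * e₁ + m₃) + B * e₂ * μ₁ * m₃ - μ₁ * m₂ * m₃ = 0 ∧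
        m₃ * (B * e₂ * μ₁ + μ₂ * m₂) + μ₁ * μ₂ * V' = 0) :
    0 ≤ B ^ 4 * e₁ ^ 2 * e₂ ^ 2 + 2 * B ^ 2 * e₁ * e₂ * (μ₁ + μ₂) * V' +
        (μ₁ - μ₂) ^ 2 * V' ^ 2 := by
  obtain ⟨m₂, m₃, hE1, hE2⟩ := h
  have hμ₁' : μ₁ ≠ 0 := hμ₁.ne'
  -- quadratic in m₃
  have hQ : B * e₂ * μ₁ * m₃ ^ 2 + (μ₁ * μ₂ * V' - B ^ 2 * e₁ * e₂ * μ₂ - μ₂ ^ 2 * V') * m₃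
      - μ₂ ^ 2 * B * e₁ * V' = 0 := by
    have key : μ₁ * (B * e₂ * μ₁ * m₃ ^ 2
        + (μ₁ * μ₂ * V' - B ^ 2 * e₁ * e₂ * μ₂ - μ₂ ^ 2 * V') * m₃
        - μ₂ ^ 2 * B * e₁ * V') = 0 := by
      linear_combination (μ₂ * m₃) * hE1 - (μ₂ * m₃ + (μ₂ * B * e₁ - μ₁ * m₃)) * hE2
    rcases mul_eq_zero.mp key with h' | h'
    · exact absurd h' hμ₁'
    · exact h'
  set a : ℝ := B * e₂ * μ₁
  set b : ℝ := μ₁ * μ₂ * V' - B ^ 2 * e₁ * e₂ * μ₂ - μ₂ ^ 2 * V'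
  have key : μ₂ ^ 2 * (B ^ 4 * e₁ ^ 2 * e₂ ^ 2 + 2 * B ^ 2 * e₁ * e₂ * (μ₁ + μ₂) * V' +
      (μ₁ - μ₂) ^ 2 * V' ^ 2) = (2 * a * m₃ + b) ^ 2 := by
    simp only [a, b]
    linear_combination (-4 * (B * e₂ * μ₁)) * hQ
  nlinarith [sq_nonneg (2 * a * m₃ + b), sq_nonneg μ₂, mul_pos hμ₂ hμ₂]
end

section
/- For q ∈ (0, π) and B ∈ ℝ with B² ≥ 2 csc²(q/2) csc(q), let s = √(B² − 2 csc²(q/2) csc(q)), m₂ = −2 sin⁴(q/2) csc(q) (B + s) and m₃ = sin²(q/2)(B + s); then, with m₁ = 0 and p = 0, the pair (m₂, m₃) satisfies both equilibrium equations −(m₂ − m₃ cot q)(B + m₂ cot q + m₃) − m₃ csc q (B − m₂ csc q) = 0 and csc q (csc q (−m₂ m₃ + 2 m₃² cot q + 1) − B m₃) = 0. -/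
open Real

/-- The Type II solution `(m₂, m₃)` (with `m₁ = p = 0`) satisfies both equilibrium
equations for two identical particles with potential `cot q`, provided
`B² ≥ 2 csc²(q/2) csc q`. -/
theorem stmt_7 (B q : ℝ) (hq : q ∈ Set.Ioo 0 π)
    (hB : B ^ 2 ≥ 2 * ((Real.sin (q / 2))⁻¹) ^ 2 * (Real.sin q)⁻¹) :
    let s : ℝ := Real.sqrt (B ^ 2 - 2 * ((Real.sin (q / 2))⁻¹) ^ 2 * (Real.sin q)⁻¹)
    let m₂ : ℝ := -2 * (Real.sin (q / 2)) ^ 4 * (Real.sin q)⁻¹ * (B + s)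
    let m₃ : ℝ := (Real.sin (q / 2)) ^ 2 * (B + s)
    (-(m₂ - m₃ * (Real.cos q / Real.sin q)) *
        (B + m₂ * (Real.cos q / Real.sin q) + m₃) -
      m₃ * (Real.sin q)⁻¹ * (B - m₂ * (Real.sin q)⁻¹) = 0) ∧
    ((Real.sin q)⁻¹ *
        ((Real.sin q)⁻¹ * (-(m₂ * m₃) + 2 * m₃ ^ 2 * (Real.cos q / Real.sin q) + 1) -
          B * m₃) = 0) := by
  intro s m₂ m₃
  have hq1 := hq.1
  have hq2 := hq.2
  have hpi := Real.pi_pos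
  have hc : (0:ℝ) < Real.sin (q/2) :=
    Real.sin_pos_of_pos_of_lt_pi (by linarith) (by linarith)
  have hk : (0:ℝ) < Real.cos (q/2) :=
    Real.cos_pos_of_mem_Ioo ⟨by linarith, by linarith⟩
  have hsin : Real.sin q = 2 * Real.sin (q/2) * Real.cos (q/2) := by
    conv_lhs => rw [show q = 2*(q/2) by ring]
    rw [Real.sin_two_mul]
  have hpy : Real.sin (q/2)^2 + Real.cos (q/2)^2 = 1 := Real.sin_sq_add_cos_sq _
  have hcos : Real.cos q = 1 - 2 * Real.sin (q/2)^2 := by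
    conv_lhs => rw [show q = 2*(q/2) by ring]
    rw [Real.cos_two_mul]; linarith
  have hs2 : s^2 = B ^ 2 - 2 * ((Real.sin (q / 2))⁻¹) ^ 2 * (Real.sin q)⁻¹ := by
    unfold s
    exact Real.sq_sqrt (by linarith)
  rw [hsin] at hs2
  unfold m₂ m₃
  rw [hsin, hcos]
  have hcne : Real.sin (q/2) ≠ 0 := ne_of_gt hc
  have hkne : Real.cos (q/2) ≠ 0 := ne_of_gt hk
  have hs2' := hs2
  field_simp at hs2'
  constructor
  · field_simp
    linear_combination (2*Real.sin (q/2)^3*(B+s)^2) * hpy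
  · field_simp
    linear_combination (Real.cos (q/2)) * hs2' +
      (-Real.sin (q/2)^3*(B+s)^2) * hpy
end
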